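/- Let p be a prime and let M(p) = #{q_p(u) : 0 ≤ u ≤ p-1} be the image size of the Fermat quotient map on {0,...,p-1}. Then M(p) ≥ π(p-1)^2 / (π(p-1) + p - 2), where π is the prime counting function. In particular M(p) ≫ p/(log p)^2. -/

import Mathlib

/-!
Let `P` be the set of primes below `p`. By Cauchy–Schwarz, `#P ^ 2 ≤ #q_p(P) · C`, where `C` counts
the pairs `(a, b) ∈ P × P` with `q_p(a) = q_p(b)`. Off the diagonal such a pair has
`a ^ (p - 1) ≡ b ^ (p - 1) [MOD p²]`, so `a / b` is a nontrivial `(p - 1)`-th root of unity in the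
cyclic group `(ℤ/p²)ˣ`; by unique factorisation and `a, b < p` the pair is determined by `a / b`.
Hence `C ≤ #P + (p - 2)`.
-/

open Finset

/-- The Fermat quotient `q_p(u)`: the unique integer in `[0, p-1]` congruent to
`(u^(p-1) - 1)/p` modulo `p` when `gcd(u,p) = 1`, and `0` on multiples of `p`. -/
def fermatQuotient (p : ℕ) (u : ℤ) : ℤ :=
  if (p : ℤ) ∣ u then 0 else ((u ^ (p - 1) - 1) / (p : ℤ)) % (p : ℤ)

section Collisions

variable {α β : Type*} [DecidableEq β]

theorem Finset.sum_sq_card_fiber_eq_card_collisions (s : Finset α) (f : α → β) :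
    ∑ b ∈ s.image f, #{a ∈ s | f a = b} ^ 2 = #{x ∈ s ×ˢ s | f x.1 = f x.2} := by
  rw [card_eq_sum_card_fiberwise (f := fun x => f x.1) (t := s.image f)]
  · refine sum_congr rfl fun b _ => ?_
    rw [sq, ← card_product]
    congr 1
    ext ⟨x, y⟩
    simp only [mem_filter, mem_product]
    grind
  · intro x hx
    exact mem_image_of_mem f (mem_product.mp (mem_filter.mp hx).1).1

theorem Finset.sq_card_le_card_image_mul_card_collisions (s : Finset α) (f : α → β) :
    #s ^ 2 ≤ #(s.image f) * #{x ∈ s ×ˢ s | f x.1 = f x.2} := by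
  rw [← sum_sq_card_fiber_eq_card_collisions, card_eq_sum_card_image f s]
  exact sq_sum_le_card_mul_sum_sq

theorem Finset.card_collisions_le [DecidableEq α] (s : Finset α) (f : α → β) :
    #{x ∈ s ×ˢ s | f x.1 = f x.2} ≤ #s + #{x ∈ s.offDiag | f x.1 = f x.2} := by
  rw [← diag_union_offDiag, filter_union, ← diag_card s]
  exact (card_union_le _ _).trans (Nat.add_le_add_right (card_filter_le _ _) _)

end Collisions

theorem card_offDiag_pow_eq_le {α G : Type*} [DecidableEq α] [CommGroup G] [Fintype G]
    [DecidableEq G] (s : Finset α) (u : α → G) (n : ℕ) (hu : Set.InjOn u s)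
    (hratio : Set.InjOn (fun x : α × α => u x.1 / u x.2) s.offDiag) :
    #{x ∈ s.offDiag | u x.1 ^ n = u x.2 ^ n} ≤ #{g : G | g ^ n = 1} - 1 := by
  refine (card_le_card_of_injOn (fun x => u x.1 / u x.2) (fun x hx => ?_)
    (hratio.mono (filter_subset _ _))).trans_eq
      (card_erase_of_mem (mem_filter.mpr ⟨mem_univ _, one_pow n⟩))
  obtain ⟨hx, hpow⟩ := mem_filter.mp hx
  obtain ⟨ha, hb, hab⟩ := mem_offDiag.mp hx
  refine mem_coe.mpr <| mem_erase.mpr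
    ⟨fun h => hab (hu ha hb (div_eq_one.mp h)), mem_filter.mpr ⟨mem_univ _, ?_⟩⟩
  rw [div_pow, hpow, div_self']

theorem ZMod.card_pow_sub_one_eq_one_le {p : ℕ} [Fact p.Prime] :
    #{g : (ZMod (p ^ 2))ˣ | g ^ (p - 1) = 1} ≤ p - 1 := by
  have hp : p.Prime := Fact.out
  rcases eq_or_ne p 2 with rfl | hp2
  · simp [filter_eq']
  · have := ZMod.isCyclic_units_of_prime_pow p hp hp2 2
    convert IsCyclic.card_pow_eq_one_le (α := (ZMod (p ^ 2))ˣ) (n := p - 1)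
      (by have := hp.two_le; omega)

theorem Nat.Prime.eq_and_eq_of_mul_eq_mul {a b c d : ℕ} (ha : a.Prime) (hb : b.Prime)
    (hc : c.Prime) (hab : a ≠ b) (h : a * d = c * b) : a = c ∧ b = d := by
  have hac : a = c := by
    have : a ∣ c * b := h ▸ dvd_mul_right a d
    rcases (Nat.Prime.dvd_mul ha).mp this with hdvd | hdvd
    · exact (Nat.prime_dvd_prime_iff_eq ha hc).mp hdvd
    · exact absurd ((Nat.prime_dvd_prime_iff_eq ha hb).mp hdvd) hab
  subst hac
  exact ⟨rfl, (Nat.eq_of_mul_eq_mul_left ha.pos h).symm⟩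

theorem ZMod.natCast_inj_of_lt {n a b : ℕ} (ha : a < n) (hb : b < n)
    (h : (a : ZMod n) = b) : a = b := by
  rwa [ZMod.natCast_eq_natCast_iff', Nat.mod_eq_of_lt ha, Nat.mod_eq_of_lt hb] at h

def ZMod.unitOfNat (n ℓ : ℕ) : (ZMod n)ˣ :=
  if h : ℓ.Coprime n then ZMod.unitOfCoprime ℓ h else 1

theorem ZMod.coe_unitOfNat {n ℓ : ℕ} (h : ℓ.Coprime n) : (ZMod.unitOfNat n ℓ : ZMod n) = ℓ := by
  rw [ZMod.unitOfNat, dif_pos h, ZMod.coe_unitOfCoprime]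

theorem fermatQuotient_spec {p : ℕ} (hp : p.Prime) {u : ℤ} (hu : ¬ (p : ℤ) ∣ u) :
    (u : ZMod (p ^ 2)) ^ (p - 1) = 1 + p * fermatQuotient p u := by
  have hcop : IsCoprime u p :=
    ((Nat.prime_iff_prime_int.mp hp).irreducible.coprime_iff_not_dvd.mpr hu).symm
  obtain ⟨k, hk⟩ := (Int.ModEq.pow_card_sub_one_eq_one hp hcop).symm.dvd
  have hp0 : (p : ℤ) ≠ 0 := by exact_mod_cast hp.ne_zero
  have hk' : (u : ZMod (p ^ 2)) ^ (p - 1) - 1 = p * k := by exact_mod_cast congrArg Int.cast hk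
  have hpp : (p : ZMod (p ^ 2)) ^ 2 = 0 := by exact_mod_cast ZMod.natCast_self (p ^ 2)
  rw [fermatQuotient, if_neg hu, hk, Int.mul_ediv_cancel_left _ hp0, Int.emod_def]
  push_cast
  linear_combination hk' + ((k / p : ℤ) : ZMod (p ^ 2)) * hpp

theorem pow_sub_one_eq_of_fermatQuotient_eq {p : ℕ} (hp : p.Prime) {u v : ℤ}
    (hu : ¬ (p : ℤ) ∣ u) (hv : ¬ (p : ℤ) ∣ v) (h : fermatQuotient p u = fermatQuotient p v) :
    (u : ZMod (p ^ 2)) ^ (p - 1) = (v : ZMod (p ^ 2)) ^ (p - 1) := by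
  rw [fermatQuotient_spec hp hu, fermatQuotient_spec hp hv, h]

section PrimesBelow

variable {p : ℕ} [Fact p.Prime]

theorem coe_unitOfNat_of_mem_primesBelow {ℓ : ℕ} (hℓ : ℓ ∈ p.primesBelow) :
    (ZMod.unitOfNat (p ^ 2) ℓ : ZMod (p ^ 2)) = ℓ :=
  ZMod.coe_unitOfNat <| ((Nat.coprime_primes (Nat.prime_of_mem_primesBelow hℓ) Fact.out).mpr
    (Nat.lt_of_mem_primesBelow hℓ).ne).pow_right 2

theorem mul_eq_mul_of_unitOfNat_mul_eq {a b c d : ℕ} (ha : a ∈ p.primesBelow)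
    (hb : b ∈ p.primesBelow) (hc : c ∈ p.primesBelow) (hd : d ∈ p.primesBelow)
    (h : ZMod.unitOfNat (p ^ 2) a * ZMod.unitOfNat (p ^ 2) b =
      ZMod.unitOfNat (p ^ 2) c * ZMod.unitOfNat (p ^ 2) d) :
    a * b = c * d := by
  have hlt : ∀ {x y : ℕ}, x ∈ p.primesBelow → y ∈ p.primesBelow → x * y < p ^ 2 :=
    fun hx hy => sq p ▸
      Nat.mul_lt_mul'' (Nat.lt_of_mem_primesBelow hx) (Nat.lt_of_mem_primesBelow hy)
  refine ZMod.natCast_inj_of_lt (hlt ha hb) (hlt hc hd) ?_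
  simpa [coe_unitOfNat_of_mem_primesBelow, ha, hb, hc, hd] using congrArg Units.val h

theorem injOn_unitOfNat_primesBelow : Set.InjOn (ZMod.unitOfNat (p ^ 2)) p.primesBelow :=
  fun a ha b hb h => Nat.mul_self_inj.mp (mul_eq_mul_of_unitOfNat_mul_eq ha ha hb hb (by rw [h]))

theorem injOn_unitOfNat_div_offDiag_primesBelow :
    Set.InjOn (fun x : ℕ × ℕ => ZMod.unitOfNat (p ^ 2) x.1 / ZMod.unitOfNat (p ^ 2) x.2)
      p.primesBelow.offDiag := by
  rintro ⟨a, b⟩ hab ⟨c, d⟩ hcd h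
  obtain ⟨ha, hb, hne⟩ := mem_offDiag.mp hab
  obtain ⟨hc, hd, -⟩ := mem_offDiag.mp hcd
  obtain ⟨rfl, rfl⟩ := Nat.Prime.eq_and_eq_of_mul_eq_mul (Nat.prime_of_mem_primesBelow ha)
    (Nat.prime_of_mem_primesBelow hb) (Nat.prime_of_mem_primesBelow hc) hne
    (mul_eq_mul_of_unitOfNat_mul_eq ha hd hc hb (div_eq_div_iff_mul_eq_mul.mp h))
  rfl

theorem unitOfNat_pow_sub_one_eq_of_fermatQuotient_eq {a b : ℕ} (ha : a ∈ p.primesBelow)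
    (hb : b ∈ p.primesBelow) (h : fermatQuotient p a = fermatQuotient p b) :
    ZMod.unitOfNat (p ^ 2) a ^ (p - 1) = ZMod.unitOfNat (p ^ 2) b ^ (p - 1) := by
  have hndvd : ∀ {ℓ : ℕ}, ℓ ∈ p.primesBelow → ¬ (p : ℤ) ∣ ℓ := fun hℓ => by
    exact_mod_cast Nat.not_dvd_of_pos_of_lt (Nat.prime_of_mem_primesBelow hℓ).pos
      (Nat.lt_of_mem_primesBelow hℓ)
  ext
  push_cast [coe_unitOfNat_of_mem_primesBelow ha, coe_unitOfNat_of_mem_primesBelow hb]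
  exact_mod_cast pow_sub_one_eq_of_fermatQuotient_eq Fact.out (hndvd ha) (hndvd hb) h

theorem card_offDiag_fermatQuotient_eq_le :
    #{x ∈ p.primesBelow.offDiag | fermatQuotient p x.1 = fermatQuotient p x.2} ≤ p - 2 :=
  calc _ ≤ #{x ∈ p.primesBelow.offDiag |
          ZMod.unitOfNat (p ^ 2) x.1 ^ (p - 1) = ZMod.unitOfNat (p ^ 2) x.2 ^ (p - 1)} :=
        card_le_card <| monotone_filter_right _ fun x hx =>
          unitOfNat_pow_sub_one_eq_of_fermatQuotient_eq (mem_offDiag.mp hx).1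
            (mem_offDiag.mp hx).2.1
    _ ≤ #{g : (ZMod (p ^ 2))ˣ | g ^ (p - 1) = 1} - 1 :=
        card_offDiag_pow_eq_le _ _ _ injOn_unitOfNat_primesBelow
          injOn_unitOfNat_div_offDiag_primesBelow
    _ ≤ p - 2 := by
        have := ZMod.card_pow_sub_one_eq_one_le (p := p)
        omega

end PrimesBelow

theorem image_size_lower_bound (p : ℕ) (hp : p.Prime) :
    ((Nat.primeCounting (p - 1) : ℝ) ^ 2) / (Nat.primeCounting (p - 1) + p - 2 : ℝ) ≤
      (((Finset.range p).image (fun u : ℕ => fermatQuotient p (u : ℤ))).card : ℝ) := by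
  have : Fact p.Prime := ⟨hp⟩
  set P := p.primesBelow
  set f := fun u : ℕ => fermatQuotient p (u : ℤ)
  have hπ : Nat.primeCounting (p - 1) = #P :=
    (Nat.primeCounting_sub_one p).trans (Nat.primesBelow_card_eq_primeCounting' p).symm
  have hcount : #P ^ 2 ≤ #((range p).image f) * (#P + (p - 2)) :=
    calc #P ^ 2 ≤ #(P.image f) * #{x ∈ P ×ˢ P | f x.1 = f x.2} :=
          sq_card_le_card_image_mul_card_collisions P f
      _ ≤ #((range p).image f) * (#P + (p - 2)) := by
          gcongr
          · exact filter_subset _ _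
          · exact (card_collisions_le P f).trans
              (Nat.add_le_add_left card_offDiag_fermatQuotient_eq_le _)
  have hden : (Nat.primeCounting (p - 1) + p - 2 : ℝ) = ((#P + (p - 2) : ℕ) : ℝ) := by
    push_cast [hπ, Nat.cast_sub hp.two_le]
    ring
  rw [hden, hπ]
  exact div_le_of_le_mul₀ (Nat.cast_nonneg _) (Nat.cast_nonneg _) (by exact_mod_cast hcount)
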